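/- For two chain recurrent points x and y of a flow on a compact metric space, x and y are chain equivalent if and only if the set of attractors containing x equals the set of attractors containing y. -/

import Mathlib

variable {X : Type*}

/-- `φ` is a flow: a continuous group action of `ℝ` on `X`. -/
def IsFlow [TopologicalSpace X] (φ : X → ℝ → X) : Prop :=
  Continuous (fun p : X × ℝ => φ p.1 p.2) ∧ (∀ x, φ x 0 = x) ∧
    ∀ (x : X) (s t : ℝ), φ (φ x s) t = φ x (s + t)

/-- An `(ε, T)`-chain from `x` to `y`: a finite sequence of points starting at `x`
and ending at `y`, with jump times at least `T`, where each jump lands within `ε`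
of the next point. -/
def IsETChain [MetricSpace X] (φ : X → ℝ → X) (ε T : ℝ) (x y : X) : Prop :=
  ∃ (n : ℕ) (z : ℕ → X) (t : ℕ → ℝ), 1 ≤ n ∧ z 0 = x ∧ z n = y ∧
    ∀ i < n, T ≤ t i ∧ dist (φ (z i) (t i)) (z (i + 1)) < ε

/-- A pseudo-orbit from `x` to `y`: `(ε,T)`-chains exist for all `ε, T > 0`. -/
def Pseudo [MetricSpace X] (φ : X → ℝ → X) (x y : X) : Prop :=
  ∀ ε > (0 : ℝ), ∀ T > (0 : ℝ), IsETChain φ ε T x y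

/-- A point is chain recurrent if there is a pseudo-orbit from it to itself. -/
def ChainRec [MetricSpace X] (φ : X → ℝ → X) (x : X) : Prop := Pseudo φ x x

/-- A set is invariant under the flow `φ`. -/
def IsInvariant' (φ : X → ℝ → X) (A : Set X) : Prop :=
  ∀ x ∈ A, ∀ t : ℝ, φ x t ∈ A

/-- `A` is an attractor of `φ`: a compact nonempty invariant set having a
neighbourhood all of whose points converge uniformly to `A`. -/
def IsAttractor [MetricSpace X] (φ : X → ℝ → X) (A : Set X) : Prop :=
  IsCompact A ∧ A.Nonempty ∧ IsInvariant' φ A ∧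
    ∃ U : Set X, IsOpen U ∧ A ⊆ U ∧
      ∀ ε > (0 : ℝ), ∃ T : ℝ, ∀ t ≥ T, ∀ x ∈ U, Metric.infDist (φ x t) A < ε

/-- A repellor is an attractor of the time-reversed flow. -/
def IsRepellor [MetricSpace X] (φ : X → ℝ → X) (A : Set X) : Prop :=
  IsAttractor (fun x t => φ x (-t)) A

/-- `B` is a trapping region for `A`: an open forward-invariant set with
`φ(cl B, t) ⊆ B` for all `t ≥ T` for some `T > 0`, and `A = ⋂_{t ≥ 0} φ(B, t)`. -/
def IsTrappingFor [TopologicalSpace X] (φ : X → ℝ → X) (A B : Set X) : Prop :=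
  IsOpen B ∧ (∀ x ∈ B, ∀ t ≥ (0 : ℝ), φ x t ∈ B) ∧
    (∃ T > (0 : ℝ), ∀ t ≥ T, ∀ x ∈ closure B, φ x t ∈ B) ∧
    A = ⋂ t ∈ Set.Ici (0 : ℝ), (fun x => φ x t) '' B

/-- `A` is an attractor of `φ` (trapping-region definition). -/
def IsAttractorT [TopologicalSpace X] (φ : X → ℝ → X) (A : Set X) : Prop :=
  IsCompact A ∧ A.Nonempty ∧ IsInvariant' φ A ∧ ∃ B, IsTrappingFor φ A B

/-- The dual repellor of an attractor with trapping region `B`: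
`A* = ⋂_{t ≤ 0} φ(X \ B, t)`. -/
def dualRepellor (φ : X → ℝ → X) (B : Set X) : Set X :=
  ⋂ t ∈ Set.Ici (0 : ℝ), (fun x => φ x (-t)) '' Bᶜ

/-! If `x ⇝ y` and `x` lies in an attractor `A` with trapping region `B`, then `B` contains a
compact set `φ_T(cl B)` with a margin `ε`, so `(ε, T)`-chains from `x` never leave `B`; hence `y`
lies in the ω-limit of `B`, which is contained in `A`.

Conversely, if there is no `(ε, T)`-chain from `x` to `y`, take `δ ≤ ε` so small that a
`δ`-error, propagated over a time at most `T`, stays below `ε`. The points reachable from `x`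
by `(δ, T)`-chains form an open set `P`, and `⋃_{s ≥ 0} φ_s(P)` is a trapping region: by
uniform continuity of `φ_T`, the image of its closure under `φ_T` lies in `P`. Its attractor
contains `x` by chain recurrence and the first part, but not `y`, since every point of the
trapping region is reachable from `x` by an `(ε, T)`-chain. -/

open Set Filter Relation

section IsFlow

variable [TopologicalSpace X] {φ : X → ℝ → X}

theorem IsFlow.continuous_apply (hφ : IsFlow φ) (t : ℝ) : Continuous (φ · t) :=
  hφ.1.comp (continuous_id.prodMk continuous_const)

theorem IsFlow.apply_zero (hφ : IsFlow φ) (x : X) : φ x 0 = x :=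
  hφ.2.1 x

theorem IsFlow.apply_apply (hφ : IsFlow φ) (x : X) (s t : ℝ) : φ (φ x s) t = φ x (s + t) :=
  hφ.2.2 x s t

theorem IsFlow.apply_neg_apply (hφ : IsFlow φ) (x : X) (s : ℝ) : φ (φ x (-s)) s = x := by
  rw [hφ.apply_apply, neg_add_cancel, hφ.apply_zero]

end IsFlow

theorem exists_pos_forall_dist_apply_lt [MetricSpace X] [CompactSpace X] {φ : X → ℝ → X}
    (hc : Continuous fun p : X × ℝ => φ p.1 p.2) {ε : ℝ} (hε : 0 < ε) (T : ℝ) :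
    ∃ δ > 0, ∀ a c : X, dist a c < δ → ∀ s ∈ Icc 0 T, dist (φ a s) (φ c s) < ε := by
  obtain ⟨δ, hδ, h⟩ := Metric.uniformContinuousOn_iff.1
    ((isCompact_univ.prod isCompact_Icc).uniformContinuousOn_of_continuous hc.continuousOn) ε hε
  exact ⟨δ, hδ, fun a c hac s hs =>
    h (a, s) ⟨trivial, hs⟩ (c, s) ⟨trivial, hs⟩ (by simpa [Prod.dist_eq] using hac)⟩

section Chains

variable [MetricSpace X] {φ : X → ℝ → X} {ε ε' T T' : ℝ} {x y z w : X}

def ETStep (φ : X → ℝ → X) (ε T : ℝ) (z w : X) : Prop :=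
  ∃ t ≥ T, dist (φ z t) w < ε

theorem ETStep.mono (hε : ε ≤ ε') (hT : T' ≤ T) (h : ETStep φ ε T z w) : ETStep φ ε' T' z w :=
  let ⟨t, ht, hd⟩ := h
  ⟨t, hT.trans ht, hd.trans_le hε⟩

theorem isETChain_iff_transGen : IsETChain φ ε T x y ↔ TransGen (ETStep φ ε T) x y := by
  constructor
  · rintro ⟨n, z, t, hn, rfl, rfl, hstep⟩
    have key : ∀ i < n, TransGen (ETStep φ ε T) (z 0) (z (i + 1)) := by
      intro i
      induction i with
      | zero => exact fun h => .single ⟨t 0, hstep 0 h⟩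
      | succ i ih => exact fun h => (ih (by omega)).tail ⟨t (i + 1), hstep (i + 1) h⟩
    simpa [Nat.sub_add_cancel hn] using key (n - 1) (by omega)
  · intro h
    induction h with
    | @single w hst =>
      obtain ⟨t, ht, hd⟩ := hst
      exact ⟨1, fun i => if i = 0 then x else w, fun _ => t, le_rfl, rfl, rfl,
        fun i hi => by simpa [show i = 0 by omega] using ⟨ht, hd⟩⟩
    | @tail _ w _ hst ih =>
      obtain ⟨t₀, ht₀, hd⟩ := hst
      obtain ⟨n, z, t, hn, hz0, hzn, hstep⟩ := ih
      refine ⟨n + 1, Function.update z (n + 1) w, Function.update t n t₀, by omega,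
        by simp [hz0], by simp, fun i hi => ?_⟩
      rcases Nat.lt_succ_iff_lt_or_eq.1 hi with hi | rfl
      · simpa [Function.update_apply, hi.ne, show i ≠ n + 1 by omega] using hstep i hi
      · simpa [Function.update_apply, hzn] using ⟨ht₀, hd⟩

theorem isOpen_setOf_transGen_etStep : IsOpen {w | TransGen (ETStep φ ε T) x w} := by
  refine isOpen_iff_mem_nhds.2 fun w hw => ?_
  obtain ⟨b, hxb, t, ht, hd⟩ := TransGen.tail'_iff.1 hw
  refine mem_of_superset (Metric.isOpen_ball.mem_nhds (Metric.mem_ball'.2 hd)) fun w' hw' => ?_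
  exact TransGen.tail' hxb ⟨t, ht, Metric.mem_ball'.1 hw'⟩

end Chains

section TrappingRegion

variable [TopologicalSpace X] {φ : X → ℝ → X} {A B : Set X} {z : X}

theorem IsTrappingFor.subset (hφ : IsFlow φ) (hB : IsTrappingFor φ A B) : A ⊆ B := by
  intro z hz
  rw [hB.2.2.2] at hz
  obtain ⟨b, hb, rfl⟩ := mem_iInter₂.1 hz 0 self_mem_Ici
  simpa [hφ.apply_zero] using hb

theorem IsTrappingFor.mem_iff (hφ : IsFlow φ) (hB : IsTrappingFor φ A B) :
    z ∈ A ↔ ∀ r, φ z r ∈ closure B := by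
  obtain ⟨-, hfwd, ⟨T, -, htrap⟩, rfl⟩ := hB
  constructor
  · intro hz r
    obtain ⟨b, hb, rfl⟩ := mem_iInter₂.1 hz |r| (abs_nonneg r)
    rw [hφ.apply_apply]
    exact subset_closure (hfwd b hb _ (by linarith [neg_abs_le r]))
  · refine fun h => mem_iInter₂.2 fun s _ => ⟨φ z (-s), ?_, hφ.apply_neg_apply z s⟩
    simpa [hφ.apply_apply] using htrap T le_rfl _ (h (-s - T))

theorem IsTrappingFor.isClosed (hφ : IsFlow φ) (hB : IsTrappingFor φ A B) : IsClosed A := by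
  have hA : A = ⋂ r, (φ · r) ⁻¹' closure B := by
    ext z
    simp [hB.mem_iff hφ]
  exact hA ▸ isClosed_iInter fun r => isClosed_closure.preimage (hφ.continuous_apply r)

theorem IsTrappingFor.isInvariant (hφ : IsFlow φ) (hB : IsTrappingFor φ A B) :
    IsInvariant' φ A := fun z hz t =>
  (hB.mem_iff hφ).2 fun r => hφ.apply_apply z t r ▸ (hB.mem_iff hφ).1 hz (t + r)

theorem IsTrappingFor.omegaLimit_subset (hφ : IsFlow φ) (hB : IsTrappingFor φ A B) :
    omegaLimit atTop (fun t x => φ x t) B ⊆ A := by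
  refine fun y hy => (hB.mem_iff hφ).2 fun r => ?_
  refine map_mem_closure (f := (φ · r)) (hφ.continuous_apply r)
    (omegaLimit_subset_closure_image2 _ _ _ (Ici_mem_atTop |r|) hy) ?_
  rintro _ ⟨t, ht, b, hb, rfl⟩
  show φ (φ b t) r ∈ B
  rw [hφ.apply_apply]
  exact hB.2.1 b hb _ (by linarith [neg_abs_le r, mem_Ici.1 ht])

theorem IsTrappingFor.isAttractorT [CompactSpace X] (hφ : IsFlow φ) (hB : IsTrappingFor φ A B)
    (hne : B.Nonempty) : IsAttractorT φ A :=
  ⟨(hB.isClosed hφ).isCompact, (nonempty_omegaLimit atTop _ _ hne).mono (hB.omegaLimit_subset hφ),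
    hB.isInvariant hφ, B, hB⟩

end TrappingRegion

section Absorption

variable [MetricSpace X] [CompactSpace X] {φ : X → ℝ → X} {A B : Set X} {x y : X}

theorem IsTrappingFor.exists_forall_etStep_mem (hφ : IsFlow φ) (hB : IsTrappingFor φ A B) :
    ∃ ε > 0, ∃ T > 0, ∀ z ∈ B, ∀ w, ETStep φ ε T z w → w ∈ B := by
  obtain ⟨hBo, hfwd, ⟨T, hT, htrap⟩, -⟩ := hB
  have hK : (φ · T) '' closure B ⊆ B := by
    rintro _ ⟨u, hu, rfl⟩
    exact htrap T le_rfl u hu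
  obtain ⟨ε, hε, hthick⟩ :=
    (isClosed_closure.isCompact.image (hφ.continuous_apply T)).exists_thickening_subset_open hBo hK
  refine ⟨ε, hε, T, hT, fun z hz w ⟨t, ht, hd⟩ => hthick (Metric.mem_thickening_iff.2 ?_)⟩
  refine ⟨φ z t, ⟨φ z (t - T), subset_closure (hfwd z hz _ (by linarith)), ?_⟩, by rwa [dist_comm]⟩
  simp [hφ.apply_apply]

theorem IsTrappingFor.mem_of_pseudo (hφ : IsFlow φ) (hB : IsTrappingFor φ A B)
    (hxy : Pseudo φ x y) (hx : x ∈ B) : y ∈ A := by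
  obtain ⟨ε₀, hε₀, T₀, hT₀, hstep⟩ := hB.exists_forall_etStep_mem hφ
  refine hB.omegaLimit_subset hφ ((mem_omegaLimit_iff_frequently _ _ _ _).2 fun n hn => ?_)
  obtain ⟨ε, hε, hball⟩ := Metric.mem_nhds_iff.1 hn
  refine frequently_atTop.2 fun a => ?_
  have hreach : ∀ b, ReflTransGen (ETStep φ (min ε ε₀) (max a T₀)) x b → b ∈ B := by
    intro b hxb
    induction hxb with
    | refl => exact hx
    | tail _ hst ih => exact hstep _ ih _ (hst.mono (min_le_right _ _) (le_max_right _ _))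
  obtain ⟨b, hxb, t, ht, hd⟩ := TransGen.tail'_iff.1 (isETChain_iff_transGen.1
    (hxy (min ε ε₀) (lt_min hε hε₀) (max a T₀) (lt_max_of_lt_right hT₀)))
  exact ⟨t, (le_max_left _ _).trans ht, b, hreach b hxb, hball (hd.trans_le (min_le_left _ _))⟩

end Absorption

/-- `⋃_{s ≥ 0} φ_s(P)`, written with the inverse maps `φ_{-s}`. -/
def forwardOrbit (φ : X → ℝ → X) (P : Set X) : Set X :=
  ⋃ s ≥ (0 : ℝ), (φ · (-s)) ⁻¹' P

theorem mem_forwardOrbit {φ : X → ℝ → X} {P : Set X} {w : X} :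
    w ∈ forwardOrbit φ P ↔ ∃ s ≥ 0, φ w (-s) ∈ P := by
  simp [forwardOrbit]

section ForwardOrbit

variable [TopologicalSpace X] {φ : X → ℝ → X} {P : Set X} {w : X}

theorem subset_forwardOrbit (hφ : IsFlow φ) : P ⊆ forwardOrbit φ P :=
  fun p hp => mem_forwardOrbit.2 ⟨0, le_rfl, by rwa [neg_zero, hφ.apply_zero]⟩

theorem isOpen_forwardOrbit (hφ : IsFlow φ) (hP : IsOpen P) : IsOpen (forwardOrbit φ P) :=
  isOpen_biUnion fun s _ => hP.preimage (hφ.continuous_apply (-s))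

theorem apply_mem_forwardOrbit (hφ : IsFlow φ) (hw : w ∈ forwardOrbit φ P) {t : ℝ} (ht : 0 ≤ t) :
    φ w t ∈ forwardOrbit φ P := by
  obtain ⟨s, hs, hp⟩ := mem_forwardOrbit.1 hw
  refine mem_forwardOrbit.2 ⟨s + t, by linarith, ?_⟩
  rwa [hφ.apply_apply, show t + -(s + t) = -s by ring]

end ForwardOrbit

section ChainForwardOrbit

variable [MetricSpace X] {φ : X → ℝ → X} {P : Set X} {ε δ T : ℝ} {x w : X}

theorem mapsTo_closure_forwardOrbit [CompactSpace X] (hφ : IsFlow φ)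
    (hP : ∀ z ∈ P, ∀ w, ETStep φ δ T z w → w ∈ P) (hδ : 0 < δ) :
    MapsTo (φ · T) (closure (forwardOrbit φ P)) P := by
  intro u hu
  obtain ⟨η, hη, hmod⟩ := Metric.uniformContinuous_iff.1
    (CompactSpace.uniformContinuous_of_continuous (hφ.continuous_apply T)) δ hδ
  obtain ⟨v, hv, huv⟩ := Metric.mem_closure_iff.1 hu η hη
  obtain ⟨s, hs, hp⟩ := mem_forwardOrbit.1 hv
  refine hP _ hp _ ⟨s + T, by linarith, ?_⟩
  rw [hφ.apply_apply, neg_add_cancel_left]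
  exact hmod (by rwa [dist_comm])

theorem isTrappingFor_forwardOrbit [CompactSpace X] (hφ : IsFlow φ) (hPo : IsOpen P)
    (hP : ∀ z ∈ P, ∀ w, ETStep φ δ T z w → w ∈ P) (hδ : 0 < δ) (hT : 0 < T) :
    IsTrappingFor φ (⋂ t ∈ Ici (0 : ℝ), (φ · t) '' forwardOrbit φ P) (forwardOrbit φ P) := by
  refine ⟨isOpen_forwardOrbit hφ hPo, fun w hw t ht => apply_mem_forwardOrbit hφ hw ht,
    ⟨T, hT, fun t ht u hu => ?_⟩, rfl⟩
  rw [show t = T + (t - T) by ring, ← hφ.apply_apply]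
  exact apply_mem_forwardOrbit hφ
    (subset_forwardOrbit hφ (mapsTo_closure_forwardOrbit hφ hP hδ hu)) (by linarith)

theorem transGen_etStep_of_mem_forwardOrbit (hφ : IsFlow φ) (hε : 0 < ε) (hδε : δ ≤ ε)
    (hmod : ∀ a c : X, dist a c < δ → ∀ s ∈ Icc 0 T, dist (φ a s) (φ c s) < ε)
    (hw : w ∈ forwardOrbit φ {z | TransGen (ETStep φ δ T) x z}) :
    TransGen (ETStep φ ε T) x w := by
  obtain ⟨s, hs, hp⟩ := mem_forwardOrbit.1 hw
  have hwp := hφ.apply_neg_apply w s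
  rcases le_or_gt T s with hTs | hsT
  · refine (TransGen.mono (fun _ _ => ETStep.mono hδε le_rfl) _ _ hp).tail ⟨s, hTs, ?_⟩
    rwa [hwp, dist_self]
  · obtain ⟨b, hxb, t, ht, hd⟩ := TransGen.tail'_iff.1 hp
    refine TransGen.tail' (ReflTransGen.mono (fun _ _ => ETStep.mono hδε le_rfl) _ _ hxb)
      ⟨t + s, by linarith, ?_⟩
    rw [← hφ.apply_apply, ← hwp]
    exact hmod _ _ hd s ⟨hs, hsT.le⟩

end ChainForwardOrbit

theorem pseudo_of_forall_isAttractorT_mem [MetricSpace X] [CompactSpace X] {φ : X → ℝ → X}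
    {x y : X} (hφ : IsFlow φ) (hx : ChainRec φ x)
    (h : ∀ A, IsAttractorT φ A → x ∈ A → y ∈ A) : Pseudo φ x y := by
  intro ε hε T hT
  obtain ⟨δ, hδ, hmod⟩ := exists_pos_forall_dist_apply_lt hφ.1 hε T
  have hδ' : 0 < min δ ε := lt_min hδ hε
  have hB := isTrappingFor_forwardOrbit hφ isOpen_setOf_transGen_etStep
    (fun z (hz : TransGen _ x z) w hzw => hz.tail hzw) hδ' hT
  have hxB := subset_forwardOrbit hφ (isETChain_iff_transGen.1 (hx _ hδ' T hT))
  have hyA := h _ (hB.isAttractorT hφ ⟨x, hxB⟩) (hB.mem_of_pseudo hφ hx hxB)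
  exact isETChain_iff_transGen.2 (transGen_etStep_of_mem_forwardOrbit hφ hε (min_le_right _ _)
    (fun a c hac => hmod a c (hac.trans_le (min_le_left _ _))) (hB.subset hφ hyA))

/-- two chain recurrent points are chain equivalent iff they are
contained in exactly the same attractors. -/
theorem chain_equiv_iff_same_attractors [MetricSpace X] [CompactSpace X]
    (φ : X → ℝ → X) (hφ : IsFlow φ) (x y : X)
    (hx : ChainRec φ x) (hy : ChainRec φ y) :
    (Pseudo φ x y ∧ Pseudo φ y x) ↔
      (∀ A : Set X, IsAttractorT φ A → (x ∈ A ↔ y ∈ A)) := by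
  constructor
  · rintro ⟨hxy, hyx⟩ A ⟨-, -, -, B, hB⟩
    exact ⟨fun hxA => hB.mem_of_pseudo hφ hxy (hB.subset hφ hxA),
      fun hyA => hB.mem_of_pseudo hφ hyx (hB.subset hφ hyA)⟩
  · intro h
    exact ⟨pseudo_of_forall_isAttractorT_mem hφ hx fun A hA => (h A hA).1,
      pseudo_of_forall_isAttractorT_mem hφ hy fun A hA => (h A hA).2⟩
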